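/- Let n ≥ 1 and let R be a commutative ring. Let D be a finite type of arcs on the vertex set {0,1,…,n} with source, target and weight maps satisfying t(e) ≠ 0 and s(e) ≠ t(e) for all e, let a, b, c ∈ {0,1,…,n} with b ≠ 0, a ≠ b, c ≠ b, and let ω ∈ R. Let Γ be the weighted matrix digraph whose arcs are D together with one extra arc e from a to b of weight ω, and let Γ' be the digraph whose arcs are D together with one extra arc e' from c to b of weight ω. Suppose that b and c are not strongly connected in Γ'. Then for every arborescence B of Γ that contains the arc e, the arc set obtained from B by replacing e with e' (i.e. (B \ {e}) ∪ {e'}) is an arborescence of Γ'. -/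

import Mathlib

attribute [local instance] Classical.propDecidable

/-- A directed path within the arc set `S` from `u` to `v`: a nonempty list of arcs `e₁,…,e_r`
of `S` with `s e₁ = u`, `t eₖ = s eₖ₊₁` for `k < r`, and `t e_r = v`. -/
def HasPathIn {V E : Type*} (s t : E → V) (S : Finset E) (u v : V) : Prop :=
  ∃ (l : List E) (hl : l ≠ []), (∀ e ∈ l, e ∈ S) ∧
    List.Chain' (fun e f => t e = s f) l ∧ s (l.head hl) = u ∧ t (l.getLast hl) = v

/-- A directed cycle within the arc set `S`: a nonempty list of arcs `e₁,…,e_r` of `S` with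
`t eₖ = s eₖ₊₁` for `k < r` and `t e_r = s e₁`. -/
def HasCycleIn {V E : Type*} (s t : E → V) (S : Finset E) : Prop :=
  ∃ (l : List E) (hl : l ≠ []), (∀ e ∈ l, e ∈ S) ∧
    List.Chain' (fun e f => t e = s f) l ∧ t (l.getLast hl) = s (l.head hl)

/-- An arborescence of the matrix digraph on vertices `{0,…,n}`: a set `S` of `n` arcs such
that every vertex `i ∈ {1,…,n}` is the target of exactly one arc of `S` and `S` contains no
directed cycle. -/
def IsArbor {E : Type*} (n : ℕ) (s t : E → Fin (n + 1)) (S : Finset E) : Prop :=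
  S.card = n ∧ (∀ i : Fin (n + 1), i ≠ 0 → ∃! e, e ∈ S ∧ t e = i) ∧ ¬ HasCycleIn s t S

/-- Vertices `u` and `v` are strongly connected in the digraph with arcs `E`: there is a
directed path from `u` to `v` and one from `v` to `u` among all arcs. -/
def StronglyConnectedIn {V E : Type*} [Fintype E] (s t : E → V) (u v : V) : Prop :=
  HasPathIn s t Finset.univ u v ∧ HasPathIn s t Finset.univ v u

/-! A cycle of the new arc set that avoids `e'` is a cycle of `B` in `Γ`, since the two digraphs
differ only in the source of the extra arc. A cycle through `e'` can be rotated to start with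
`e'`; the rest of it is then a path from `b` to `c`, which together with `e'` itself would make
`b` and `c` strongly connected in `Γ'`. The targets of all arcs are unchanged, so the in-degree
condition survives. -/

section

variable {V E : Type*} {s t s' : E → V} {S T : Finset E} {u v : V}

theorem hasPathIn_of_mem {e : E} (he : e ∈ S) : HasPathIn s t S (s e) (t e) :=
  ⟨[e], List.cons_ne_nil e [], by simpa using he, List.isChain_singleton e, rfl, rfl⟩

theorem HasPathIn.mono (h : HasPathIn s t S u v) (hST : S ⊆ T) : HasPathIn s t T u v := by
  obtain ⟨l, hl, hS, hchain, hu, hv⟩ := h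
  exact ⟨l, hl, fun e he => hST (hS e he), hchain, hu, hv⟩

theorem HasCycleIn.mono (h : HasCycleIn s t S) (hST : S ⊆ T) : HasCycleIn s t T := by
  obtain ⟨l, hl, hS, hchain, hclose⟩ := h
  exact ⟨l, hl, fun e he => hST (hS e he), hchain, hclose⟩

theorem HasCycleIn.congr_source (h : HasCycleIn s t S) (hs : ∀ e ∈ S, s e = s' e) :
    HasCycleIn s' t S := by
  obtain ⟨l, hl, hS, hchain, hclose⟩ := h
  refine ⟨l, hl, hS, ?_, by rw [hclose, hs _ (hS _ (l.head_mem hl))]⟩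
  exact List.IsChain.imp_of_mem_imp (fun e f _ hf hef => by rw [hef, hs f (hS f hf)]) hchain

theorem hasPathIn_of_isChain_cons_append_singleton {e : E} {p : List E}
    (hS : ∀ f ∈ e :: p, f ∈ S) (h : (e :: (p ++ [e])).IsChain fun e f => t e = s f) :
    HasPathIn s t S (t e) (s e) := by
  rcases eq_or_ne p [] with rfl | hp
  · have hloop : t e = s e := by simpa using h
    simpa [hloop] using hasPathIn_of_mem (s := s) (t := t) (hS e List.mem_cons_self)
  · refine ⟨p, hp, fun f hf => hS f (List.mem_cons_of_mem e hf), h.tail.left_of_append, ?_, ?_⟩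
    · exact ((List.isChain_cons.1 h).1 (p.head hp) (by simp [List.head?_eq_some_head hp])).symm
    · exact h.tail.rel_getLast_head_of_append hp (List.cons_ne_nil e [])

theorem HasCycleIn.erase_or_hasPathIn [DecidableEq E] (h : HasCycleIn s t S) (e : E) :
    HasCycleIn s t (S.erase e) ∨ HasPathIn s t S (t e) (s e) := by
  obtain ⟨l, hl, hS, hchain, hclose⟩ := h
  by_cases he : e ∈ l
  · right
    have hcyc : Cycle.Chain (fun e f => t e = s f) (l : Cycle E) := by
      rw [Cycle.chain_ne_nil _ hl]
      refine List.IsChain.cons hchain fun f hf => ?_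
      rw [List.head?_eq_some_head hl, Option.mem_some_iff] at hf
      rwa [← hf]
    obtain ⟨l₁, l₂, rfl⟩ := List.append_of_mem he
    have hrot : l₁ ++ e :: l₂ ~r e :: (l₂ ++ l₁) := List.isRotated_append
    rw [Cycle.coe_eq_coe.2 hrot, Cycle.chain_coe_cons] at hcyc
    exact hasPathIn_of_isChain_cons_append_singleton (fun f hf => hS f (hrot.perm.mem_iff.2 hf))
      hcyc
  · left
    exact ⟨l, hl, fun f hf => Finset.mem_erase.2 ⟨ne_of_mem_of_not_mem hf he, hS f hf⟩,
      hchain, hclose⟩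

end

theorem replaced_arc_arborescence_general
    (n : ℕ) (D : Type*) [Fintype D] [DecidableEq D]
    (sD tD : D → Fin (n + 1))
    (a b c : Fin (n + 1))
    (hΓ' : ¬ StronglyConnectedIn (Sum.elim sD fun _ : Unit => c)
            (Sum.elim tD fun _ : Unit => b) b c)
    (B : Finset (D ⊕ Unit))
    (hB : IsArbor n (Sum.elim sD fun _ : Unit => a) (Sum.elim tD fun _ : Unit => b) B)
    (heB : Sum.inr () ∈ B) :
    IsArbor n (Sum.elim sD fun _ : Unit => c) (Sum.elim tD fun _ : Unit => b)
      (insert (Sum.inr ()) (B.erase (Sum.inr ()))) := by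
  rw [Finset.insert_erase heB]
  obtain ⟨hcard, hparent, hacyclic⟩ := hB
  refine ⟨hcard, hparent, fun hcycle => ?_⟩
  rcases hcycle.erase_or_hasPathIn (Sum.inr ()) with hcycle' | hpath
  · have hsource : ∀ e ∈ B.erase (Sum.inr ()),
        Sum.elim sD (fun _ : Unit => c) e = Sum.elim sD (fun _ : Unit => a) e := by
      rintro (_ | _) he
      · rfl
      · simp at he
    exact hacyclic ((hcycle'.congr_source hsource).mono (B.erase_subset _))
  · exact hΓ' ⟨hpath.mono (Finset.subset_univ B),
      hasPathIn_of_mem (Finset.mem_univ (Sum.inr ()))⟩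

/-- Let `Γ` have arcs `D` plus an extra arc `e : a → b` of weight `ω`, and
`Γ'` have arcs `D` plus the extra arc `e' : c → b` of weight `ω`. If `b` and `c` are not
strongly connected in `Γ'`, then for every arborescence `B` of `Γ` containing `e`, the arc set
`(B \ {e}) ∪ {e'}` is an arborescence of `Γ'`. -/
theorem replaced_arc_arborescence
    (n : ℕ) (hn : 1 ≤ n) (R : Type*) [CommRing R]
    (D : Type*) [Fintype D] [DecidableEq D]
    (sD tD : D → Fin (n + 1)) (wD : D → R)
    (htD : ∀ e, tD e ≠ 0) (hsD : ∀ e, sD e ≠ tD e)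
    (a b c : Fin (n + 1)) (hb : b ≠ 0) (hab : a ≠ b) (hcb : c ≠ b) (ω : R)
    (hΓ' : ¬ StronglyConnectedIn (Sum.elim sD fun _ : Unit => c)
            (Sum.elim tD fun _ : Unit => b) b c)
    (B : Finset (D ⊕ Unit))
    (hB : IsArbor n (Sum.elim sD fun _ : Unit => a) (Sum.elim tD fun _ : Unit => b) B)
    (heB : Sum.inr () ∈ B) :
    IsArbor n (Sum.elim sD fun _ : Unit => c) (Sum.elim tD fun _ : Unit => b)
      (insert (Sum.inr ()) (B.erase (Sum.inr ()))) :=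
  replaced_arc_arborescence_general n D sD tD a b c hΓ' B hB heB
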